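/- For n ≥ 1 and positive integer α, as a formal power series identity in x over ℚ(q): (Σ_{σ ∈ S_n} x^(des σ) q^((1 + des σ - lrmin σ)(α-1) + maj σ) [α]^(lrmin σ)) / (x;q)_{n+α} = Σ_{j≥0} x^j · qbinom(j+α, j+1) · [j+1]^n. -/

import Mathlib

open Finset

def pval {n : ℕ} (σ : Equiv.Perm (Fin n)) (i : ℕ) : ℕ :=
  if h : i < n then (σ ⟨i, h⟩ : ℕ) else 0

def desSet {n : ℕ} (σ : Equiv.Perm (Fin n)) : Finset ℕ :=
  (Finset.range (n - 1)).filter (fun i => pval σ (i + 1) < pval σ i)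

def des {n : ℕ} (σ : Equiv.Perm (Fin n)) : ℕ := (desSet σ).card

def maj {n : ℕ} (σ : Equiv.Perm (Fin n)) : ℕ := ∑ i ∈ desSet σ, (i + 1)

def lrmin {n : ℕ} (σ : Equiv.Perm (Fin n)) : ℕ :=
  ((Finset.range n).filter (fun i => ∀ j ∈ Finset.range i, pval σ i < pval σ j)).card

def rlmin {n : ℕ} (σ : Equiv.Perm (Fin n)) : ℕ :=
  ((Finset.range n).filter
    (fun i => ∀ j ∈ Finset.range n, i < j → pval σ i < pval σ j)).card

noncomputable section

abbrev K : Type := RatFunc ℚ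

def qq : K := RatFunc.X

def qint (m : ℕ) : K := ∑ i ∈ Finset.range m, qq ^ i

def qfact (m : ℕ) : K := ∏ i ∈ Finset.range m, qint (i + 1)

def qbinom (a b : ℕ) : K := qfact a / (qfact b * qfact (a - b))

def E (α β : ℕ) : ℕ → ℕ → K
  | 0, k => if k = 0 then 1 else 0
  | n + 1, 0 => qint β * E α β n 0
  | n + 1, k + 1 =>
      qq ^ (β + k) * qint (n - k + α) * E α β n k + qint (k + 1 + β) * E α β n (k + 1)

def poch (N : ℕ) : PowerSeries K :=
  ∏ i ∈ Finset.range N, (1 - PowerSeries.C (R := K) (qq ^ i) * PowerSeries.X)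

/-!
Inserting the new largest letter `n` into `σ ∈ S_n` at each of the `n + 1` positions is a
bijection `S_n × [n + 1] ≃ S_{n+1}`. At one of the `des σ + 1` descent slots (right after a
descent, or at the end) this keeps `des` and `lrmin` and multiplies the weight by `q^r`, where `r`
counts the descent slots further right; together these give `[des σ + 1]`. At the other
`n - des σ` slots `des` grows by one and the weight is multiplied by `q^(des σ + 1)` times,
from left to right, `[α]` (at the front, where `n` becomes a new left-to-right minimum), `q^α`,
`q^(α + 1)`, …, together `q^(des σ + 1) [n - des σ - 1 + α]`. So the `x^k`-coefficients of the
numerator obey the recursion of `E α 1`, and the numerator is `[α] ∑_k E α 1 (n - 1) k x^k`.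

On the other side `1 / (x;q)_(N+1) = ∑_j qbinom (j + N) j x^j`, and the coefficient identity
`[α] ∑_{k+l=j} E α 1 m k qbinom (l + m + α) l = qbinom (j + α) (j + 1) [j + 1]^(m + 1)` follows
by induction on `m` from the recursion of `E` and the identity
`[l + k + 2] qbinom (l + 1 + N) (l + 1) = [k + 1] qbinom (l + 2 + N) (l + 1)
  + q^(k + 1) [N - k] qbinom (l + 1 + N) l`.
-/

lemma qint_one : qint 1 = 1 := by simp [qint]

lemma qint_succ (m : ℕ) : qint (m + 1) = qint m + qq ^ m := sum_range_succ _ _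

lemma qint_add (a b : ℕ) : qint (a + b) = qint a + qq ^ a * qint b := by
  simp [qint, sum_range_add, mul_sum, pow_add]

lemma qint_ne_zero {m : ℕ} (hm : m ≠ 0) : qint m ≠ 0 := by
  have hpoly : qint m = algebraMap (Polynomial ℚ) K (∑ i ∈ range m, Polynomial.X ^ i) := by
    simp [qint, qq]
  rw [hpoly, Ne, map_eq_zero_iff _ (IsFractionRing.injective _ _)]
  intro h
  simpa [hm] using congrArg (Polynomial.eval 1) h

lemma qfact_zero : qfact 0 = 1 := prod_range_zero _

lemma qfact_succ (m : ℕ) : qfact (m + 1) = qfact m * qint (m + 1) := prod_range_succ _ _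

lemma qfact_ne_zero (m : ℕ) : qfact m ≠ 0 :=
  prod_ne_zero_iff.mpr fun i _ => qint_ne_zero i.succ_ne_zero

lemma qbinom_eq_div {a b c : ℕ} (h : a = b + c) : qbinom a b = qfact a / (qfact b * qfact c) := by
  rw [qbinom, h, Nat.add_sub_cancel_left]

lemma qbinom_self (a : ℕ) : qbinom a a = 1 := by
  simp [qbinom, qfact_ne_zero, qfact_zero]

lemma qbinom_zero (a : ℕ) : qbinom a 0 = 1 := by
  simp [qbinom, qfact_ne_zero, qfact_zero]

lemma qbinom_pascal (a b : ℕ) :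
    qbinom (a + b + 2) (a + 1) =
      qbinom (a + b + 1) (a + 1) + qq ^ (b + 1) * qbinom (a + b + 1) a := by
  rw [qbinom_eq_div (show a + b + 2 = (a + 1) + (b + 1) by ring),
    qbinom_eq_div (show a + b + 1 = (a + 1) + b by ring),
    qbinom_eq_div (show a + b + 1 = a + (b + 1) by ring), show a + b + 2 = (a + b + 1) + 1 by ring,
    qfact_succ (a + b + 1), qfact_succ a, qfact_succ b,
    show a + b + 1 + 1 = (b + 1) + (a + 1) by ring, qint_add]
  have := qfact_ne_zero a
  have := qfact_ne_zero b
  have := qint_ne_zero a.succ_ne_zero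
  have := qint_ne_zero b.succ_ne_zero
  field_simp

lemma poch_succ_mul_mk_qbinom (N : ℕ) :
    poch (N + 1) * PowerSeries.mk (fun j => qbinom (j + N) j) = 1 := by
  induction N with
  | zero =>
    have hone : (fun j => qbinom (j + 0) j) = 1 := funext qbinom_self
    rw [hone, mul_comm]
    simpa [poch] using PowerSeries.mk_one_mul_one_sub_eq_one K
  | succ N ih =>
    suffices h : (1 - PowerSeries.C (qq ^ (N + 1)) * PowerSeries.X) *
        PowerSeries.mk (fun j => qbinom (j + (N + 1)) j) =
          PowerSeries.mk (fun j => qbinom (j + N) j) by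
      rw [poch, prod_range_succ, ← poch, mul_assoc, h, ih]
    ext (_ | j)
    · simp [qbinom_zero]
    · rw [sub_mul, one_mul, map_sub, mul_assoc, PowerSeries.coeff_C_mul,
        PowerSeries.coeff_succ_X_mul, PowerSeries.coeff_mk, PowerSeries.coeff_mk,
        PowerSeries.coeff_mk, show j + 1 + (N + 1) = j + N + 2 by ring,
        show j + (N + 1) = j + N + 1 by ring, show j + 1 + N = j + N + 1 by ring, qbinom_pascal]
      ring

lemma poch_inv (N : ℕ) :
    (poch (N + 1))⁻¹ = PowerSeries.mk (fun j => qbinom (j + N) j) := by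
  have h := poch_succ_mul_mk_qbinom N
  rw [PowerSeries.inv_eq_iff_mul_eq_one, mul_comm, h]
  intro h0
  simpa [h0] using congrArg PowerSeries.constantCoeff h

lemma qint_mul_qint (l k c : ℕ) :
    qint (l + k + 2) * qint (k + c + 1) =
      qint (k + 1) * qint (l + 1 + (k + c) + 1) + qq ^ (k + 1) * qint c * qint (l + 1) := by
  have hlk : qint (l + k + 2) = qint (l + 1) + qq ^ (l + 1) * qint (k + 1) := by
    rw [← qint_add]; ring_nf
  have hkc : qint (k + c + 1) = qint (k + 1) + qq ^ (k + 1) * qint c := by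
    rw [← qint_add]; ring_nf
  have hlkc : qint (l + 1 + (k + c) + 1) = qint (l + k + 2) + qq ^ (l + k + 2) * qint c := by
    rw [← qint_add]; ring_nf
  linear_combination qint (l + k + 2) * hkc - qint (k + 1) * hlkc + qq ^ (k + 1) * qint c * hlk

lemma qint_mul_qbinom (l k c : ℕ) :
    qint (l + k + 2) * qbinom (l + 1 + (k + c)) (l + 1) =
      qint (k + 1) * qbinom (l + 1 + (k + c) + 1) (l + 1) +
        qq ^ (k + 1) * qint c * qbinom (l + 1 + (k + c)) l := by
  rw [qbinom_eq_div rfl, qbinom_eq_div (show _ = (l + 1) + (k + c + 1) by ring),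
    qbinom_eq_div (show _ = l + (k + c + 1) by ring), qfact_succ (l + 1 + (k + c)),
    qfact_succ l, qfact_succ (k + c)]
  have := qfact_ne_zero l
  have := qfact_ne_zero (k + c)
  have := qint_ne_zero l.succ_ne_zero
  have := qint_ne_zero (k + c).succ_ne_zero
  field_simp
  linear_combination qfact (l + 1 + (k + c)) * qint_mul_qint l k c

lemma qbinom_succ_mul_qint (j a : ℕ) :
    qbinom (j + (a + 1)) (j + 1) * qint (j + 1) = qint (a + 1) * qbinom (j + (a + 1)) j := by
  rw [qbinom_eq_div (show _ = (j + 1) + a by ring), qbinom_eq_div rfl, qfact_succ j, qfact_succ a]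
  have := qfact_ne_zero j
  have := qfact_ne_zero a
  have := qint_ne_zero j.succ_ne_zero
  have := qint_ne_zero a.succ_ne_zero
  field_simp

lemma E_eq_zero_of_lt (α β : ℕ) {n k : ℕ} (h : n < k) : E α β n k = 0 := by
  induction n generalizing k with
  | zero => simp [E, Nat.pos_iff_ne_zero.mp h]
  | succ n ih =>
    obtain ⟨k, rfl⟩ := Nat.exists_eq_add_one_of_ne_zero (Nat.ne_zero_of_lt h)
    simp [E, ih (show n < k by omega), ih (show n < k + 1 by omega)]

lemma sum_antidiagonal_E_succ (α m j : ℕ) :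
    ∑ p ∈ antidiagonal j, E α 1 (m + 1) p.1 * qbinom (p.2 + (m + 1) + α) p.2 =
      qint (j + 1) * ∑ p ∈ antidiagonal j, E α 1 m p.1 * qbinom (p.2 + m + α) p.2 := by
  set g : ℕ → K := fun l => qbinom (l + m + α) l
  set g' : ℕ → K := fun l => qbinom (l + (m + 1) + α) l
  have hterm (k l : ℕ) : qint (k + l + 2) * (E α 1 m k * g (l + 1)) =
      qint (k + 1) * E α 1 m k * g' (l + 1) +
        qq ^ (k + 1) * qint (m - k + α) * E α 1 m k * g' l := by
    rcases le_or_gt k m with hkm | hkm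
    · have h := qint_mul_qbinom l k (m - k + α)
      simp only [g, g', show l + 1 + (k + (m - k + α)) = l + 1 + m + α by omega,
        show l + 1 + (m + 1) + α = l + 1 + m + α + 1 by ring,
        show l + (m + 1) + α = l + 1 + m + α by ring,
        show k + l + 2 = l + k + 2 by ring] at h ⊢
      linear_combination E α 1 m k * h
    · simp [E_eq_zero_of_lt α 1 hkm]
  cases j with
  | zero => simp [E, qbinom_zero, qint_one]
  | succ j =>
    have hL : ∑ p ∈ antidiagonal (j + 1), E α 1 (m + 1) p.1 * g' p.2 =
        ∑ p ∈ antidiagonal (j + 1), qint (p.1 + 1) * E α 1 m p.1 * g' p.2 +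
          ∑ p ∈ antidiagonal j,
            qq ^ (p.1 + 1) * qint (m - p.1 + α) * E α 1 m p.1 * g' p.2 := by
      rw [Nat.sum_antidiagonal_succ, Nat.sum_antidiagonal_succ]
      simp only [E, add_mul, sum_add_distrib, zero_add, qint_one, one_mul, add_comm 1]
      ring
    have hR : qint (j + 2) * ∑ p ∈ antidiagonal (j + 1), E α 1 m p.1 * g p.2 =
        ∑ p ∈ antidiagonal (j + 1), qint (p.1 + 1) * E α 1 m p.1 * g' p.2 +
          ∑ p ∈ antidiagonal j,
            qq ^ (p.1 + 1) * qint (m - p.1 + α) * E α 1 m p.1 * g' p.2 := by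
      have hsum : ∑ p ∈ antidiagonal j, qint (j + 2) * (E α 1 m p.1 * g (p.2 + 1)) =
          ∑ p ∈ antidiagonal j, (qint (p.1 + 1) * E α 1 m p.1 * g' (p.2 + 1) +
            qq ^ (p.1 + 1) * qint (m - p.1 + α) * E α 1 m p.1 * g' p.2) :=
        sum_congr rfl fun p hp => by rw [← mem_antidiagonal.mp hp, ← hterm]
      rw [Nat.sum_antidiagonal_succ', Nat.sum_antidiagonal_succ', mul_add, mul_sum, hsum,
        sum_add_distrib]
      simp only [g, g', qbinom_zero]
      ring
    exact hL.trans hR.symm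

lemma qbinom_mul_qint_pow_eq_sum_E {α : ℕ} (hα : 1 ≤ α) (m j : ℕ) :
    qbinom (j + α) (j + 1) * qint (j + 1) ^ (m + 1) =
      qint α * ∑ p ∈ antidiagonal j, E α 1 m p.1 * qbinom (p.2 + m + α) p.2 := by
  induction m with
  | zero =>
    obtain ⟨a, rfl⟩ := Nat.exists_eq_add_one_of_ne_zero (Nat.one_le_iff_ne_zero.mp hα)
    rw [sum_eq_single (0, j) (fun p hp hne => ?_) (by simp), pow_one, qbinom_succ_mul_qint]
    · simp [E]
    · obtain ⟨k, l⟩ := p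
      have hk : k ≠ 0 := fun hk => hne (by simp_all)
      simp [E, hk]
  | succ m ih => rw [pow_succ, ← mul_assoc, ih, sum_antidiagonal_E_succ]; ring

lemma C_qint_mul_mk_E_mul_poch_inv {α : ℕ} (hα : 1 ≤ α) (m : ℕ) :
    PowerSeries.C (qint α) * PowerSeries.mk (E α 1 m) * (poch (m + 1 + α))⁻¹ =
      PowerSeries.mk (fun j => qbinom (j + α) (j + 1) * qint (j + 1) ^ (m + 1)) := by
  rw [show m + 1 + α = m + α + 1 by ring, poch_inv]
  ext j
  rw [mul_assoc, PowerSeries.coeff_C_mul, PowerSeries.coeff_mul, PowerSeries.coeff_mk,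
    qbinom_mul_qint_pow_eq_sum_E hα]
  simp only [PowerSeries.coeff_mk, add_assoc]

lemma sum_card_filter_lt {ι M : Type*} [LinearOrder ι] [AddCommMonoid M] (s : Finset ι)
    (f : ℕ → M) :
    ∑ x ∈ s, f #(s.filter (· < x)) = ∑ t ∈ range #s, f t := by
  induction s using Finset.induction_on_max with
  | empty => simp
  | insert a s ha ih =>
    have has : a ∉ s := fun h => (ha a h).false
    have hbelow : (insert a s).filter (· < a) = s := by
      ext x
      simp only [mem_filter, mem_insert]
      exact ⟨fun ⟨h, hx⟩ => h.resolve_left hx.ne, fun hx => ⟨Or.inr hx, ha x hx⟩⟩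
    have hrest : ∀ x ∈ s, (insert a s).filter (· < x) = s.filter (· < x) := fun x hx => by
      rw [filter_insert, if_neg (ha x hx).not_gt]
    rw [sum_insert has, card_insert_of_notMem has, sum_range_succ, hbelow,
      sum_congr rfl fun x hx => by rw [hrest x hx], ih, add_comm]

lemma sum_card_filter_gt {ι M : Type*} [LinearOrder ι] [AddCommMonoid M] (s : Finset ι)
    (f : ℕ → M) :
    ∑ x ∈ s, f #(s.filter (x < ·)) = ∑ t ∈ range #s, f t :=
  sum_card_filter_lt (ι := ιᵒᵈ) s f

lemma sum_split_succ_trichotomy {M : Type*} [AddCommMonoid M] (s : Finset ℕ) (p : ℕ)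
    (g : ℕ → M) :
    ∑ i ∈ s, g i = ∑ i ∈ s.filter (· + 1 < p), g i + ∑ i ∈ s.filter (p ≤ ·), g i +
      ∑ i ∈ s.filter (· + 1 = p), g i := by
  simp only [sum_filter, ← sum_add_distrib]
  refine sum_congr rfl fun i _ => ?_
  split_ifs <;> first | omega | simp

lemma card_filter_add_one_eq (s : Finset ℕ) (p : ℕ) :
    #(s.filter (· + 1 = p)) = if p ∈ s.map (addRightEmbedding 1) then 1 else 0 := by
  have hmap : (s.map (addRightEmbedding 1)).filter (· = p) =
      (s.filter (· + 1 = p)).map (addRightEmbedding 1) := by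
    rw [filter_map]; rfl
  rw [← card_map (addRightEmbedding 1), ← hmap, filter_eq']
  split_ifs <;> simp

lemma mem_desSet {n : ℕ} {σ : Equiv.Perm (Fin n)} {i : ℕ} :
    i ∈ desSet σ ↔ i + 1 < n ∧ pval σ (i + 1) < pval σ i := by
  simp only [desSet, mem_filter, mem_range]
  omega

section statistics

variable {n : ℕ} (σ : Equiv.Perm (Fin n))

lemma pval_lt {i : ℕ} (hi : i < n) : pval σ i < n := by
  simp [pval, hi]

lemma des_lt (hn : n ≠ 0) : des σ < n :=
  (card_filter_le _ _).trans_lt (by rw [card_range]; omega)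

lemma lrmin_eq_sum :
    lrmin σ = ∑ i : Fin n, if ∀ j < (i : ℕ), pval σ i < pval σ j then 1 else 0 := by
  rw [lrmin, card_filter,
    ← Fin.sum_univ_eq_sum_range
      (fun i => if ∀ j ∈ range i, pval σ i < pval σ j then 1 else 0)]
  simp only [mem_range]

lemma lrmin_le_des_add_one : lrmin σ ≤ des σ + 1 := by
  calc lrmin σ ≤ #(insert 0 ((desSet σ).map (addRightEmbedding 1))) :=
        card_le_card fun i hi => ?_
    _ ≤ des σ + 1 := (card_insert_le _ _).trans (by rw [card_map, des])
  rw [mem_filter, mem_range] at hi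
  rw [mem_insert, mem_map]
  rcases i with _ | i
  · exact Or.inl rfl
  · exact Or.inr ⟨i, mem_desSet.mpr ⟨hi.1, hi.2 i (by simp)⟩, rfl⟩

end statistics

-- As a word, `insertMax σ p` is `σ` with the letter `n` inserted at position `p`.
def insertMax {n : ℕ} (σ : Equiv.Perm (Fin n)) (p : Fin (n + 1)) : Equiv.Perm (Fin (n + 1)) :=
  ((finSuccEquiv' p).trans (Equiv.optionCongr σ)).trans (finSuccEquiv' (Fin.last n)).symm

section insertMax

variable {n : ℕ} (σ : Equiv.Perm (Fin n)) (p : Fin (n + 1))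

lemma insertMax_apply_self : insertMax σ p p = Fin.last n := by
  simp [insertMax, finSuccEquiv'_symm_none]

lemma insertMax_apply_succAbove (j : Fin n) : insertMax σ p (p.succAbove j) = (σ j).castSucc := by
  simp [insertMax, finSuccEquiv'_symm_some, Fin.succAbove_last]

lemma pval_insertMax_of_lt {i : ℕ} (hi : i < p) : pval (insertMax σ p) i = pval σ i := by
  have hin : i < n := by omega
  have hsucc : (⟨i, by omega⟩ : Fin (n + 1)) = p.succAbove ⟨i, hin⟩ := by
    rw [Fin.succAbove_of_castSucc_lt _ _ hi]; rfl
  simp [pval, hin, show i < n + 1 by omega, hsucc, insertMax_apply_succAbove]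

lemma pval_insertMax_self : pval (insertMax σ p) p = n := by
  simp [pval, p.isLt, insertMax_apply_self]

lemma pval_insertMax_of_gt {i : ℕ} (hpi : p < i) (hi : i ≤ n) :
    pval (insertMax σ p) i = pval σ (i - 1) := by
  have hin : i - 1 < n := by omega
  have hsucc : (⟨i, by omega⟩ : Fin (n + 1)) = p.succAbove ⟨i - 1, hin⟩ := by
    rw [Fin.succAbove_of_le_castSucc _ _ (by rw [Fin.le_def]; simp; omega)]
    ext; simp; omega
  simp [pval, hin, show i < n + 1 by omega, hsucc, insertMax_apply_succAbove]

lemma desSet_insertMax :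
    desSet (insertMax σ p) =
      ((desSet σ).filter (· + 1 < (p : ℕ)) ∪
          ((desSet σ).filter ((p : ℕ) ≤ ·)).map (addRightEmbedding 1)) ∪
        (if (p : ℕ) < n then {(p : ℕ)} else ∅) := by
  ext i
  simp only [mem_union, mem_filter, mem_map, addRightEmbedding_apply, mem_desSet]
  rcases lt_trichotomy (i + 1) p with h | h | h
  · rw [pval_insertMax_of_lt σ p h, pval_insertMax_of_lt σ p (by omega)]
    split_ifs <;> simp <;> omega
  · rw [h, pval_insertMax_self, pval_insertMax_of_lt σ p (by omega)]
    have := pval_lt σ (show i < n by omega)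
    split_ifs <;> simp <;> omega
  rcases Nat.lt_or_ge (i + 1) (n + 1) with hi | hi
  · rcases (Nat.lt_succ_iff.mp h).eq_or_lt with h' | h'
    · rw [← h', pval_insertMax_self, pval_insertMax_of_gt σ p (by omega) (by omega)]
      have := pval_lt σ (show (p : ℕ) < n by omega)
      split_ifs <;> simp <;> omega
    · rw [pval_insertMax_of_gt σ p (by omega) (by omega),
        pval_insertMax_of_gt σ p (by omega) (by omega)]
      obtain ⟨a, rfl⟩ : ∃ a, i = a + 1 := ⟨i - 1, by omega⟩
      simp only [Nat.add_sub_cancel]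
      constructor
      · rintro ⟨-, hlt⟩
        exact Or.inl (Or.inr ⟨a, ⟨⟨by omega, hlt⟩, by omega⟩, rfl⟩)
      · rintro ((⟨-, h1⟩ | ⟨b, ⟨⟨-, hlt⟩, -⟩, hba⟩) | hmem)
        · omega
        · obtain rfl : b = a := by omega
          exact ⟨by omega, hlt⟩
        · split_ifs at hmem <;> simp at hmem; omega
  · split_ifs <;> simp <;> omega

lemma sum_desSet_insertMax {M : Type*} [AddCommMonoid M] (g : ℕ → M) :
    ∑ i ∈ desSet (insertMax σ p), g i =
      ∑ i ∈ (desSet σ).filter (· + 1 < (p : ℕ)), g i +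
        ∑ i ∈ (desSet σ).filter ((p : ℕ) ≤ ·), g (i + 1) +
          if (p : ℕ) < n then g p else 0 := by
  rw [desSet_insertMax, sum_union, sum_union, sum_map]
  · split_ifs <;> simp
  · simp only [disjoint_left, mem_filter, mem_map, addRightEmbedding_apply]
    rintro _ ⟨-, h⟩ ⟨b, ⟨-, hb⟩, rfl⟩
    omega
  · split_ifs
    · simp only [disjoint_singleton_right, mem_union, mem_filter, mem_map, addRightEmbedding_apply]
      omega
    · exact disjoint_empty_right _

lemma des_insertMax_add :
    des (insertMax σ p) + #((desSet σ).filter (· + 1 = (p : ℕ))) =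
      des σ + if (p : ℕ) < n then 1 else 0 := by
  have hins := sum_desSet_insertMax σ p (fun _ => 1)
  have hsplit := sum_split_succ_trichotomy (desSet σ) p (fun _ => 1)
  simp only [sum_const, smul_eq_mul, mul_one] at hins hsplit
  rw [des, des, hins, hsplit]
  split_ifs <;> omega

lemma maj_insertMax_add :
    maj (insertMax σ p) + p * #((desSet σ).filter (· + 1 = (p : ℕ))) =
      maj σ + #((desSet σ).filter ((p : ℕ) ≤ ·)) +
        if (p : ℕ) < n then (p : ℕ) + 1 else 0 := by
  have hins := sum_desSet_insertMax σ p (fun i => i + 1)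
  have hsplit := sum_split_succ_trichotomy (desSet σ) p (fun i => i + 1)
  have hshift : ∑ i ∈ (desSet σ).filter ((p : ℕ) ≤ ·), (i + 1 + 1) =
      ∑ i ∈ (desSet σ).filter ((p : ℕ) ≤ ·), (i + 1) +
        #((desSet σ).filter ((p : ℕ) ≤ ·)) := by
    rw [sum_add_distrib, card_eq_sum_ones]
  have hlast : ∑ i ∈ (desSet σ).filter (· + 1 = (p : ℕ)), (i + 1) =
      p * #((desSet σ).filter (· + 1 = (p : ℕ))) := by
    rw [sum_congr rfl fun i hi => (mem_filter.mp hi).2, sum_const, smul_eq_mul, mul_comm]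
  rw [maj, maj, hins, hsplit, hshift, hlast]
  split_ifs <;> omega

lemma isLRMin_insertMax_self :
    (∀ j < (p : ℕ), pval (insertMax σ p) p < pval (insertMax σ p) j) ↔ (p : ℕ) = 0 := by
  refine ⟨fun h => by_contra fun hp => ?_, fun hp j hj => by omega⟩
  have h0 := h 0 (Nat.pos_of_ne_zero hp)
  rw [pval_insertMax_self, pval_insertMax_of_lt σ p (Nat.pos_of_ne_zero hp)] at h0
  exact h0.not_gt (pval_lt σ (by omega))

lemma isLRMin_insertMax_succAbove (i : Fin n) :
    (∀ j < (p.succAbove i : ℕ),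
        pval (insertMax σ p) (p.succAbove i) < pval (insertMax σ p) j) ↔
      ∀ j < (i : ℕ), pval σ i < pval σ j := by
  rcases lt_or_ge i.castSucc p with hip | hpi
  · rw [Fin.succAbove_of_castSucc_lt _ _ hip, Fin.val_castSucc]
    rw [Fin.lt_def, Fin.val_castSucc] at hip
    rw [pval_insertMax_of_lt σ p hip]
    exact forall₂_congr fun j hj => by rw [pval_insertMax_of_lt σ p (by omega)]
  · rw [Fin.succAbove_of_le_castSucc _ _ hpi, Fin.val_succ]
    rw [Fin.le_def, Fin.val_castSucc] at hpi
    rw [pval_insertMax_of_gt σ p (by omega) (by omega), Nat.add_sub_cancel]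
    constructor
    · intro h j hj
      rcases lt_or_ge j p with hjp | hjp
      · simpa [pval_insertMax_of_lt σ p hjp] using h j (by omega)
      · simpa [pval_insertMax_of_gt σ p (show (p : ℕ) < j + 1 by omega) (by omega)]
          using h (j + 1) (by omega)
    · intro h j hj
      rcases lt_trichotomy j p with hjp | rfl | hjp
      · rw [pval_insertMax_of_lt σ p hjp]; exact h j (by omega)
      · rw [pval_insertMax_self]; exact pval_lt σ i.isLt
      · rw [pval_insertMax_of_gt σ p hjp (by omega)]; exact h (j - 1) (by omega)

lemma lrmin_insertMax : lrmin (insertMax σ p) = lrmin σ + if (p : ℕ) = 0 then 1 else 0 := by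
  simp only [lrmin_eq_sum, Fin.sum_univ_succAbove _ p, isLRMin_insertMax_self,
    isLRMin_insertMax_succAbove]
  rw [add_comm]

end insertMax

lemma bijective_uncurry_insertMax (n : ℕ) :
    Function.Bijective (Function.uncurry (insertMax (n := n))) := by
  rw [Fintype.bijective_iff_injective_and_card]
  refine ⟨fun ⟨σ, p⟩ ⟨τ, r⟩ h => ?_,
    by simp [Fintype.card_perm, Nat.factorial_succ, mul_comm]⟩
  simp only [Function.uncurry_apply_pair] at h
  obtain rfl : p = r := by
    by_contra hne
    obtain ⟨j, rfl⟩ := Fin.exists_succAbove_eq hne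
    have h' := congrArg (· (r.succAbove j)) h
    simp only [insertMax_apply_self, insertMax_apply_succAbove] at h'
    exact (Fin.castSucc_lt_last _).ne h'.symm
  have hστ : σ = τ := Equiv.ext fun j => Fin.castSucc_injective n <| by
    rw [← insertMax_apply_succAbove, ← insertMax_apply_succAbove, h]
  rw [hστ]

-- Slot `p` puts `n` at position `p`: slot `d + 1` follows the descent at `d`, slot `n` is the end.
def descentSlots {n : ℕ} (σ : Equiv.Perm (Fin n)) : Finset ℕ :=
  insert n ((desSet σ).map (addRightEmbedding 1))

def ascentSlots {n : ℕ} (σ : Equiv.Perm (Fin n)) : Finset ℕ :=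
  (range (n + 1)).filter (· ∉ descentSlots σ)

def weight (α : ℕ) {n : ℕ} (σ : Equiv.Perm (Fin n)) : K :=
  qq ^ ((1 + des σ - lrmin σ) * (α - 1) + maj σ) * qint α ^ lrmin σ

def ascentFactor (α r : ℕ) : K := if r = 0 then qint α else qq ^ (α - 1 + r)

lemma sum_range_ascentFactor {α : ℕ} (hα : 1 ≤ α) (N : ℕ) :
    ∑ r ∈ range (N + 1), ascentFactor α r = qint (α + N) := by
  induction N with
  | zero => simp [ascentFactor]
  | succ N ih =>
    rw [sum_range_succ, ih, ascentFactor, if_neg N.succ_ne_zero, ← add_assoc α, qint_succ]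
    congr 2
    omega

section slots

variable {n : ℕ} (σ : Equiv.Perm (Fin n)) (p : Fin (n + 1))

lemma mem_descentSlots {i : ℕ} :
    i ∈ descentSlots σ ↔ i = n ∨ i ∈ (desSet σ).map (addRightEmbedding 1) :=
  mem_insert

lemma lt_of_mem_map_desSet {i : ℕ} (hi : i ∈ (desSet σ).map (addRightEmbedding 1)) :
    i < n := by
  obtain ⟨d, hd, rfl⟩ := mem_map.mp hi
  exact (mem_desSet.mp hd).1

lemma card_descentSlots : #(descentSlots σ) = des σ + 1 := by
  rw [descentSlots, card_insert_of_notMem fun h => (lt_of_mem_map_desSet σ h).false, card_map, des]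

lemma descentSlots_subset_range : descentSlots σ ⊆ range (n + 1) := by
  intro i hi
  rcases (mem_descentSlots σ).mp hi with rfl | hi
  · exact self_mem_range_succ i
  · exact mem_range.mpr (Nat.lt_succ_of_lt (lt_of_mem_map_desSet σ hi))

lemma card_ascentSlots : #(ascentSlots σ) = n - des σ := by
  rw [ascentSlots, filter_notMem_eq_sdiff, card_sdiff_of_subset (descentSlots_subset_range σ),
    card_range, card_descentSlots]
  omega

lemma card_filter_descentSlots_gt (i : ℕ) :
    #((descentSlots σ).filter (i < ·)) =
      #((desSet σ).filter (i ≤ ·)) + if i < n then 1 else 0 := by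
  have hmap : ((desSet σ).map (addRightEmbedding 1)).filter (i < ·) =
      ((desSet σ).filter (i ≤ ·)).map (addRightEmbedding 1) := by
    ext x
    simp only [mem_filter, mem_map, addRightEmbedding_apply]
    constructor
    · rintro ⟨⟨d, hd, rfl⟩, h⟩; exact ⟨d, ⟨hd, by omega⟩, rfl⟩
    · rintro ⟨d, ⟨hd, h⟩, rfl⟩; exact ⟨⟨d, hd, rfl⟩, by omega⟩
  rw [descentSlots, filter_insert, hmap]
  split_ifs with h
  · rw [card_insert_of_notMem fun hn => ?_, card_map]
    obtain ⟨d, hd, hdn⟩ := mem_map.mp hn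
    exact (lt_of_mem_map_desSet σ (mem_map_of_mem _ (mem_filter.mp hd).1)).ne hdn
  · rw [card_map, add_zero]

lemma card_filter_descentSlots_lt {i : ℕ} (hi : i ≤ n) :
    #((descentSlots σ).filter (· < i)) = #((desSet σ).filter (· + 1 < i)) := by
  rw [descentSlots, filter_insert, if_neg (by omega), filter_map, card_map]
  rfl

lemma add_card_filter_desSet_eq_of_mem_ascentSlots {i : ℕ} (hi : i ∈ ascentSlots σ) :
    i + #((desSet σ).filter (i ≤ ·)) = des σ + #((ascentSlots σ).filter (· < i)) := by
  obtain ⟨hin, hiS⟩ := mem_filter.mp hi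
  rw [mem_range] at hin
  have hrange : (range (n + 1)).filter (· < i) = range i := by
    ext x; simp only [mem_filter, mem_range]; omega
  have hsplit := card_filter_add_card_filter_not (s := (range (n + 1)).filter (· < i))
    (· ∈ descentSlots σ)
  rw [filter_filter, filter_filter, hrange, card_range] at hsplit
  have hS : (range (n + 1)).filter (fun x => x < i ∧ x ∈ descentSlots σ) =
      (descentSlots σ).filter (· < i) := by
    ext x
    simp only [mem_filter, mem_range]
    exact ⟨fun h => ⟨h.2.2, h.2.1⟩,
      fun h => ⟨mem_range.mp (descentSlots_subset_range σ h.1), h.2, h.1⟩⟩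
  have hB : (range (n + 1)).filter (fun x => x < i ∧ x ∉ descentSlots σ) =
      (ascentSlots σ).filter (· < i) := by
    ext x
    simp only [ascentSlots, mem_filter]
    tauto
  have hdes := sum_split_succ_trichotomy (desSet σ) i (fun _ => 1)
  simp only [sum_const, smul_eq_mul, mul_one] at hdes
  rw [card_filter_add_one_eq, if_neg fun h => hiS (mem_insert_of_mem h)] at hdes
  rw [hS, hB, card_filter_descentSlots_lt σ (by omega)] at hsplit
  rw [des]
  omega

lemma des_maj_insertMax_of_mem_descentSlots (hp : (p : ℕ) ∈ descentSlots σ) :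
    des (insertMax σ p) = des σ ∧
      maj (insertMax σ p) = maj σ + #((descentSlots σ).filter ((p : ℕ) < ·)) := by
  have hcard : #((desSet σ).filter (· + 1 = (p : ℕ))) = if (p : ℕ) < n then 1 else 0 := by
    rw [card_filter_add_one_eq]
    rcases (mem_descentSlots σ).mp hp with hpn | hp
    · rw [if_neg fun h => (lt_of_mem_map_desSet σ h).ne hpn, if_neg hpn.not_lt]
    · rw [if_pos hp, if_pos (lt_of_mem_map_desSet σ hp)]
  have hdes := des_insertMax_add σ p
  have hmaj := maj_insertMax_add σ p
  rw [hcard] at hdes hmaj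
  rw [card_filter_descentSlots_gt]
  constructor <;> split_ifs at hdes hmaj ⊢ <;> omega

lemma des_maj_insertMax_of_notMem_descentSlots (hp : (p : ℕ) ∉ descentSlots σ) :
    des (insertMax σ p) = des σ + 1 ∧
      maj (insertMax σ p) = maj σ + des σ + 1 + #((ascentSlots σ).filter (· < (p : ℕ))) := by
  have hpn : (p : ℕ) < n :=
    (Nat.lt_succ_iff.mp p.isLt).lt_of_ne fun h => hp ((mem_descentSlots σ).mpr (Or.inl h))
  have hcard : #((desSet σ).filter (· + 1 = (p : ℕ))) = 0 := by
    rw [card_filter_add_one_eq, if_neg fun h => hp (mem_insert_of_mem h)]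
  have hrank := add_card_filter_desSet_eq_of_mem_ascentSlots σ
    (mem_filter.mpr ⟨mem_range.mpr p.isLt, hp⟩)
  have hdes := des_insertMax_add σ p
  have hmaj := maj_insertMax_add σ p
  rw [hcard, if_pos hpn] at hdes hmaj
  constructor <;> omega

lemma weight_insertMax_of_mem_descentSlots (α : ℕ) (hn : n ≠ 0)
    (hp : (p : ℕ) ∈ descentSlots σ) :
    weight α (insertMax σ p) =
      qq ^ #((descentSlots σ).filter ((p : ℕ) < ·)) * weight α σ := by
  obtain ⟨hdes, hmaj⟩ := des_maj_insertMax_of_mem_descentSlots σ p hp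
  have hp0 : (p : ℕ) ≠ 0 := by
    rcases (mem_descentSlots σ).mp hp with h | h
    · omega
    · obtain ⟨d, -, hd⟩ := mem_map.mp h
      simp [← hd]
  rw [weight, weight, hdes, hmaj, lrmin_insertMax, if_neg hp0, add_zero]
  ring

lemma weight_insertMax_of_notMem_descentSlots (α : ℕ) (hp : (p : ℕ) ∉ descentSlots σ) :
    weight α (insertMax σ p) =
      qq ^ (des σ + 1) * ascentFactor α #((ascentSlots σ).filter (· < (p : ℕ))) *
        weight α σ := by
  obtain ⟨hdes, hmaj⟩ := des_maj_insertMax_of_notMem_descentSlots σ p hp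
  have hle := lrmin_le_des_add_one σ
  rw [weight, weight, hdes, hmaj, lrmin_insertMax, ascentFactor]
  by_cases hp0 : (p : ℕ) = 0
  · simp only [hp0, if_true, filter_false_of_mem fun x _ => Nat.not_lt_zero x, card_empty,
      show 1 + (des σ + 1) - (lrmin σ + 1) = 1 + des σ - lrmin σ by omega]
    ring
  · have h0 : 0 ∈ (ascentSlots σ).filter (· < (p : ℕ)) := by
      refine mem_filter.mpr ⟨mem_filter.mpr ⟨by simp, fun h0 => ?_⟩, Nat.pos_of_ne_zero hp0⟩
      rcases (mem_descentSlots σ).mp h0 with h | h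
      · exact hp (by omega)
      · obtain ⟨d, -, hd⟩ := mem_map.mp h
        simp at hd
    rw [if_neg hp0, add_zero, if_neg (card_ne_zero_of_mem h0),
      show 1 + (des σ + 1) - lrmin σ = (1 + des σ - lrmin σ) + 1 by omega]
    ring

lemma sum_weight_insertMax {α : ℕ} (hα : 1 ≤ α) (hn : n ≠ 0) (k : ℕ) :
    ∑ p : Fin (n + 1), (if des (insertMax σ p) = k then weight α (insertMax σ p) else 0) =
      (if des σ = k then qint (k + 1) * weight α σ else 0) +
        (if des σ + 1 = k then qq ^ k * qint (n - k + α) * weight α σ else 0) := by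
  let f : ℕ → K := fun i => if i ∈ descentSlots σ then
      (if des σ = k then qq ^ #((descentSlots σ).filter (i < ·)) * weight α σ else 0) else
      (if des σ + 1 = k then
        qq ^ (des σ + 1) * ascentFactor α #((ascentSlots σ).filter (· < i)) * weight α σ
      else 0)
  have hterm (p : Fin (n + 1)) :
      (if des (insertMax σ p) = k then weight α (insertMax σ p) else 0) = f p := by
    by_cases hp : (p : ℕ) ∈ descentSlots σ
    · simp only [f, if_pos hp, (des_maj_insertMax_of_mem_descentSlots σ p hp).1,
        weight_insertMax_of_mem_descentSlots σ p α hn hp]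
    · simp only [f, if_neg hp, (des_maj_insertMax_of_notMem_descentSlots σ p hp).1,
        weight_insertMax_of_notMem_descentSlots σ p α hp]
  have hS : (range (n + 1)).filter (· ∈ descentSlots σ) = descentSlots σ := by
    rw [filter_mem_eq_inter, inter_eq_right.mpr (descentSlots_subset_range σ)]
  have hdesc :
      ∑ i ∈ descentSlots σ, qq ^ #((descentSlots σ).filter (i < ·)) = qint (des σ + 1) := by
    rw [sum_card_filter_gt _ (qq ^ ·), card_descentSlots]
    rfl
  have hasc : ∑ i ∈ ascentSlots σ, ascentFactor α #((ascentSlots σ).filter (· < i)) =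
      qint (n - (des σ + 1) + α) := by
    have := des_lt σ hn
    rw [sum_card_filter_lt, card_ascentSlots, show n - des σ = n - (des σ + 1) + 1 by omega,
      sum_range_ascentFactor hα, add_comm]
  rw [sum_congr rfl fun p _ => hterm p, Fin.sum_univ_eq_sum_range f, sum_ite, hS]
  change _ + ∑ i ∈ ascentSlots σ, _ = _
  rcases eq_or_ne (des σ) k with rfl | h1
  · simp [← sum_mul, hdesc]
  rcases eq_or_ne (des σ + 1) k with rfl | h2
  · simp only [if_neg h1, if_true, sum_const_zero, zero_add, ← sum_mul, ← mul_sum, hasc]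
  · simp [h1, h2]

end slots

def desWeightSum (n α k : ℕ) : K :=
  ∑ σ : Equiv.Perm (Fin n), if des σ = k then weight α σ else 0

lemma desWeightSum_succ {n α : ℕ} (hα : 1 ≤ α) (hn : n ≠ 0) (k : ℕ) :
    desWeightSum (n + 1) α k = qint (k + 1) * desWeightSum n α k +
      qq ^ k * qint (n - k + α) *
        ∑ σ : Equiv.Perm (Fin n), if des σ + 1 = k then weight α σ else 0 := by
  rw [desWeightSum, ← Fintype.sum_bijective _ (bijective_uncurry_insertMax n)
    (fun x => if des (insertMax x.1 x.2) = k then weight α (insertMax x.1 x.2) else 0) _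
    fun _ => rfl, Fintype.sum_prod_type]
  simp only [sum_weight_insertMax _ hα hn, sum_add_distrib, desWeightSum, mul_sum, mul_ite,
    mul_zero]

lemma desWeightSum_eq_E {α : ℕ} (hα : 1 ≤ α) (m k : ℕ) :
    desWeightSum (m + 1) α k = qint α * E α 1 m k := by
  induction m generalizing k with
  | zero =>
    have hlrmin : lrmin (1 : Equiv.Perm (Fin 1)) = 1 := by decide
    have hweight : weight α (1 : Equiv.Perm (Fin 1)) = qint α := by
      simp [weight, hlrmin, show des (1 : Equiv.Perm (Fin 1)) = 0 from rfl,
        show maj (1 : Equiv.Perm (Fin 1)) = 0 from rfl]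
    have hone (σ : Equiv.Perm (Fin 1)) : σ = 1 := Subsingleton.elim σ 1
    rw [desWeightSum, Fintype.sum_eq_single 1 fun σ h => absurd (hone σ) h,
      show des (1 : Equiv.Perm (Fin 1)) = 0 from rfl, hweight, E]
    split_ifs <;> simp_all [eq_comm]
  | succ m ih =>
    rw [desWeightSum_succ hα m.succ_ne_zero]
    cases k with
    | zero => simp [ih, E, qint_one]
    | succ k =>
      have hshift :
          (∑ σ : Equiv.Perm (Fin (m + 1)), if des σ + 1 = k + 1 then weight α σ else 0) =
          desWeightSum (m + 1) α k := by
        simp only [add_left_inj, desWeightSum]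
      rw [hshift, ih, ih, E, show m + 1 - (k + 1) = m - k by omega]
      ring

lemma sum_C_weight_mul_X_pow_des {α : ℕ} (hα : 1 ≤ α) (m : ℕ) :
    ∑ σ : Equiv.Perm (Fin (m + 1)), PowerSeries.C (weight α σ) * PowerSeries.X ^ des σ =
      PowerSeries.C (qint α) * PowerSeries.mk (E α 1 m) := by
  ext k
  rw [map_sum, PowerSeries.coeff_C_mul, PowerSeries.coeff_mk, ← desWeightSum_eq_E hα]
  simp only [PowerSeries.coeff_C_mul_X_pow, desWeightSum, eq_comm]

theorem alpha_carlitz (n α : ℕ) (hn : 1 ≤ n) (hα : 1 ≤ α) :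
    (∑ σ : Equiv.Perm (Fin n),
        PowerSeries.C (R := K) (qq ^ ((1 + des σ - lrmin σ) * (α - 1) + maj σ) * qint α ^ lrmin σ) *
          PowerSeries.X ^ des σ) * (poch (n + α))⁻¹ =
      PowerSeries.mk (fun j => qbinom (j + α) (j + 1) * qint (j + 1) ^ n) := by
  obtain ⟨m, rfl⟩ := Nat.exists_eq_add_one_of_ne_zero (Nat.one_le_iff_ne_zero.mp hn)
  exact (congrArg (· * (poch (m + 1 + α))⁻¹) (sum_C_weight_mul_X_pow_des hα m)).trans
    (C_qint_mul_mk_E_mul_poch_inv hα m)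

end
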